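/- Assume n ≥ 2, 0 ≤ ω ≤ √2, 0 ≤ ζ ≤ √2, c_1 ≥ 0 and c_3 ∈ ℝ, and for 1 ≤ i ≤ n define r_i : ℝ^m → ℝ by r_i(x) = (n/2) Σ_{l ∈ L_i} ⟨b_l, x⟩² + (c_1/2)‖x‖² − c_3 n x_1 if i = 1, and r_i(x) = (n/2) Σ_{l ∈ L_i} ⟨b_l, x⟩² + (c_1/2)‖x‖² if 2 ≤ i ≤ n. Then: (i) each r_i is (2n + c_1)-smooth; (ii) each r_i is c_1-strongly convex, i.e., x ↦ r_i(x) − (c_1/2)‖x‖² is convex; (iii) the family {r_i}_{i=1}^n is L'-average smooth with L' = √( (4/n)[(n + c_1)² + n²] + c_1² ). -/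

import Mathlib

/-! With `S_i w = ∑_{l ∈ L_i} ⟪b_l, w⟫ b_l`, the gradient difference of `r_i` is
`∇r_i u - ∇r_i v = n S_i (u - v) + c₁ (u - v)`; the linear term cancels. The vectors `b_l` and
`b_{l'}` have disjoint supports once `|l - l'| ≥ 2`, and two indices of one class `L_i` differ
by at least `n ≥ 2`, so each class gives an orthogonal family with `‖b_l‖² ≤ 2`. For such a
family `∑ ⟪b_l, w⟫² ≤ 2 ‖w‖²` (Bessel) and `‖S_i w‖² ≤ 2 ∑ ⟪b_l, w⟫²`, hence `‖S_i‖ ≤ 2`.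
Over all `l` the even and the odd indices form two such families, so `∑_l ⟪b_l, w⟫² ≤ 4 ‖w‖²`,
and expanding `‖n S_i w + c₁ w‖²` and summing over `i` gives the average bound. -/

open scoped RealInnerProductSpace BigOperators

open Finset

section Quadratic

variable {E ι : Type*} [NormedAddCommGroup E] [InnerProductSpace ℝ E]

theorem hasGradientAt_of_quadratic [CompleteSpace E] {f : E → ℝ} {κ c : ℝ} {s : Finset ι}
    {b : ι → E} {a : E}
    (hf : ∀ x, f x = κ / 2 * ∑ l ∈ s, ⟪b l, x⟫ ^ 2 + c / 2 * ‖x‖ ^ 2 - ⟪a, x⟫) (x : E) :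
    HasGradientAt f (κ • ∑ l ∈ s, ⟪b l, x⟫ • b l + c • x - a) x := by
  have hinner (v : E) : HasFDerivAt (⟪v, ·⟫) (innerSL ℝ v) x := (innerSL ℝ v).hasFDerivAt
  have hderiv := (((HasFDerivAt.fun_sum (u := s) fun l _ => (hinner (b l)).pow 2).const_mul
    (κ / 2)).add ((hasStrictFDerivAt_norm_sq x).hasFDerivAt.const_mul (c / 2))).sub (hinner a)
  rw [funext hf, hasGradientAt_iff_hasFDerivAt]
  refine hderiv.congr_fderiv (ContinuousLinearMap.ext fun y => ?_)
  simp [real_inner_comm, mul_sum, ← mul_assoc]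

theorem gradient_sub_gradient_of_quadratic [CompleteSpace E] {f : E → ℝ} {κ c : ℝ}
    {s : Finset ι} {b : ι → E} {a : E}
    (hf : ∀ x, f x = κ / 2 * ∑ l ∈ s, ⟪b l, x⟫ ^ 2 + c / 2 * ‖x‖ ^ 2 - ⟪a, x⟫) (u v : E) :
    gradient f u - gradient f v = κ • ∑ l ∈ s, ⟪b l, u - v⟫ • b l + c • (u - v) := by
  simp only [(hasGradientAt_of_quadratic hf u).gradient, (hasGradientAt_of_quadratic hf v).gradient,
    inner_sub_right, sub_smul, sum_sub_distrib, smul_sub]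
  abel

theorem convexOn_sub_of_quadratic {f : E → ℝ} {κ c : ℝ} {s : Finset ι} {b : ι → E} {a : E}
    (hf : ∀ x, f x = κ / 2 * ∑ l ∈ s, ⟪b l, x⟫ ^ 2 + c / 2 * ‖x‖ ^ 2 - ⟪a, x⟫) (hκ : 0 ≤ κ) :
    ConvexOn ℝ Set.univ fun x => f x - c / 2 * ‖x‖ ^ 2 := by
  have hsq : ConvexOn ℝ Set.univ fun x => ∑ l ∈ s, ⟪b l, x⟫ ^ 2 := by
    simpa only [sum_fn] using sum_induction (s := s) (fun l x => ⟪b l, x⟫ ^ 2)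
      (ConvexOn ℝ Set.univ) (fun _ _ => ConvexOn.add) (convexOn_const 0 convex_univ)
      fun l _ => (even_two.convexOn_pow (𝕜 := ℝ)).comp_linearMap (innerₛₗ ℝ (b l))
  refine ((hsq.smul (by positivity : 0 ≤ κ / 2)).sub
    ((innerₛₗ ℝ a).concaveOn convex_univ)).congr fun x _ => ?_
  simp only [Pi.sub_apply, smul_eq_mul, innerₛₗ_apply_apply, hf]
  ring

end Quadratic

section Orthogonal

variable {E ι : Type*} [NormedAddCommGroup E] [InnerProductSpace ℝ E] {s : Finset ι} {b : ι → E}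
  {K : ℝ}

theorem inner_sum_inner_smul_self (s : Finset ι) (b : ι → E) (w : E) :
    ⟪∑ l ∈ s, ⟪b l, w⟫ • b l, w⟫ = ∑ l ∈ s, ⟪b l, w⟫ ^ 2 := by
  simp only [sum_inner, real_inner_smul_left, sq]

theorem norm_sum_inner_smul_sq (hb : (s : Set ι).Pairwise fun l l' => ⟪b l, b l'⟫ = 0) (w : E) :
    ‖∑ l ∈ s, ⟪b l, w⟫ • b l‖ ^ 2 = ∑ l ∈ s, ⟪b l, w⟫ ^ 2 * ‖b l‖ ^ 2 := by
  rw [← real_inner_self_eq_norm_sq, sum_inner]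
  refine sum_congr rfl fun l hl => ?_
  rw [real_inner_smul_left, inner_sum, sum_eq_single_of_mem l hl fun l' hl' hne => by
    rw [real_inner_smul_right, hb hl hl' hne.symm, mul_zero], real_inner_smul_right,
    real_inner_self_eq_norm_sq]
  ring

theorem norm_sum_inner_smul_sq_le (hb : (s : Set ι).Pairwise fun l l' => ⟪b l, b l'⟫ = 0)
    (hK : ∀ l ∈ s, ‖b l‖ ^ 2 ≤ K) (w : E) :
    ‖∑ l ∈ s, ⟪b l, w⟫ • b l‖ ^ 2 ≤ K * ∑ l ∈ s, ⟪b l, w⟫ ^ 2 := by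
  rw [norm_sum_inner_smul_sq hb, mul_sum]
  exact sum_le_sum fun l hl => by
    rw [mul_comm K]; exact mul_le_mul_of_nonneg_left (hK l hl) (sq_nonneg _)

theorem sum_inner_sq_le (hb : (s : Set ι).Pairwise fun l l' => ⟪b l, b l'⟫ = 0)
    (hK : ∀ l ∈ s, ‖b l‖ ^ 2 ≤ K) (hK0 : 0 ≤ K) (w : E) :
    ∑ l ∈ s, ⟪b l, w⟫ ^ 2 ≤ K * ‖w‖ ^ 2 := by
  set S := ∑ l ∈ s, ⟪b l, w⟫ • b l
  set T := ∑ l ∈ s, ⟪b l, w⟫ ^ 2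
  have hT : 0 ≤ T := sum_nonneg fun _ _ => sq_nonneg _
  -- `T = ⟪S, w⟫ ≤ ‖S‖ ‖w‖` and `‖S‖² ≤ K T`, so `T² ≤ K T ‖w‖²`.
  have hcs : T ≤ ‖S‖ * ‖w‖ :=
    (inner_sum_inner_smul_self s b w).symm.trans_le (real_inner_le_norm _ _)
  have hS : ‖S‖ ^ 2 ≤ K * T := norm_sum_inner_smul_sq_le hb hK w
  nlinarith [norm_nonneg S, norm_nonneg w, mul_nonneg hK0 (sq_nonneg ‖w‖)]

theorem norm_smul_sum_inner_smul_add_smul_le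
    (hb : (s : Set ι).Pairwise fun l l' => ⟪b l, b l'⟫ = 0) (hK : ∀ l ∈ s, ‖b l‖ ^ 2 ≤ K)
    (hK0 : 0 ≤ K) {κ c : ℝ} (hκ : 0 ≤ κ) (hc : 0 ≤ c) (w : E) :
    ‖κ • ∑ l ∈ s, ⟪b l, w⟫ • b l + c • w‖ ≤ (K * κ + c) * ‖w‖ := by
  have hS : ‖∑ l ∈ s, ⟪b l, w⟫ • b l‖ ≤ K * ‖w‖ := by
    refine (pow_le_pow_iff_left₀ (norm_nonneg _) (by positivity) two_ne_zero).mp ?_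
    calc ‖∑ l ∈ s, ⟪b l, w⟫ • b l‖ ^ 2 ≤ K * ∑ l ∈ s, ⟪b l, w⟫ ^ 2 :=
          norm_sum_inner_smul_sq_le hb hK w
      _ ≤ K * (K * ‖w‖ ^ 2) := mul_le_mul_of_nonneg_left (sum_inner_sq_le hb hK hK0 w) hK0
      _ = (K * ‖w‖) ^ 2 := by ring
  calc ‖κ • ∑ l ∈ s, ⟪b l, w⟫ • b l + c • w‖
      ≤ κ * ‖∑ l ∈ s, ⟪b l, w⟫ • b l‖ + c * ‖w‖ := by
        refine (norm_add_le _ _).trans_eq ?_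
        rw [norm_smul, norm_smul, Real.norm_of_nonneg hκ, Real.norm_of_nonneg hc]
    _ ≤ κ * (K * ‖w‖) + c * ‖w‖ := by gcongr
    _ = (K * κ + c) * ‖w‖ := by ring

theorem norm_smul_sum_inner_smul_add_smul_sq_le
    (hb : (s : Set ι).Pairwise fun l l' => ⟪b l, b l'⟫ = 0) (hK : ∀ l ∈ s, ‖b l‖ ^ 2 ≤ K)
    (κ c : ℝ) (w : E) :
    ‖κ • ∑ l ∈ s, ⟪b l, w⟫ • b l + c • w‖ ^ 2
      ≤ (K * κ ^ 2 + 2 * κ * c) * ∑ l ∈ s, ⟪b l, w⟫ ^ 2 + c ^ 2 * ‖w‖ ^ 2 := by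
  rw [norm_add_sq_real, norm_smul, norm_smul, real_inner_smul_left, real_inner_smul_right,
    inner_sum_inner_smul_self, mul_pow, mul_pow, Real.norm_eq_abs, Real.norm_eq_abs, sq_abs,
    sq_abs]
  nlinarith [mul_le_mul_of_nonneg_left (norm_sum_inner_smul_sq_le hb hK w) (sq_nonneg κ)]

end Orthogonal

theorem sum_Icc_sum_filter_mod_eq {M : Type*} [AddCommMonoid M] {n : ℕ} (hn : 0 < n)
    (s : Finset ℕ) (f : ℕ → M) :
    ∑ i ∈ Icc 1 n, ∑ l ∈ s with l % n = (i - 1) % n, f l = ∑ l ∈ s, f l := by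
  have hmaps : ∀ l ∈ s, l % n + 1 ∈ Icc 1 n := fun l _ => by
    simpa using Nat.mod_lt l hn
  rw [← sum_fiberwise_of_maps_to hmaps]
  refine sum_congr rfl fun i hi => sum_congr (filter_congr fun l _ => ?_) fun _ _ => rfl
  rw [mem_Icc] at hi
  rw [Nat.mod_eq_of_lt (by omega : i - 1 < n)]
  omega

section Chain

variable {E : Type*} [NormedAddCommGroup E] [InnerProductSpace ℝ E] {b : ℕ → E} {m : ℕ}
  {K : ℝ}

theorem pairwise_inner_eq_zero_of_mod_eq
    (hchain : ∀ l l', l' ≤ m → l + 2 ≤ l' → ⟪b l, b l'⟫ = 0) {p : ℕ} (hp : 2 ≤ p) (k : ℕ) :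
    (↑(range (m + 1) |>.filter (· % p = k)) : Set ℕ).Pairwise fun l l' => ⟪b l, b l'⟫ = 0 := by
  have key (l l') (hl' : l' ≤ m) (hlt : l < l') (hmod : l % p = l' % p) : ⟪b l, b l'⟫ = 0 :=
    hchain l l' hl' (by
      have := Nat.le_of_dvd (by omega) ((Nat.modEq_iff_dvd' hlt.le).mp hmod)
      omega)
  intro l hl l' hl' hne
  simp only [coe_filter, mem_range, Set.mem_ofPred_eq] at hl hl'
  rcases hne.lt_or_gt with hlt | hlt
  · exact key l l' (by omega) hlt (hl.2.trans hl'.2.symm)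
  · rw [real_inner_comm]
    exact key l' l (by omega) hlt (hl'.2.trans hl.2.symm)

-- The even- and the odd-indexed `b_l` form two orthogonal families.
theorem sum_range_inner_sq_le (hchain : ∀ l l', l' ≤ m → l + 2 ≤ l' → ⟪b l, b l'⟫ = 0)
    (hK : ∀ l ∈ range (m + 1), ‖b l‖ ^ 2 ≤ K) (hK0 : 0 ≤ K) (w : E) :
    ∑ l ∈ range (m + 1), ⟪b l, w⟫ ^ 2 ≤ 2 * K * ‖w‖ ^ 2 := by
  rw [← sum_Icc_sum_filter_mod_eq two_pos]
  calc ∑ i ∈ Icc 1 2, ∑ l ∈ range (m + 1) with l % 2 = (i - 1) % 2, ⟪b l, w⟫ ^ 2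
      ≤ ∑ i ∈ Icc 1 2, K * ‖w‖ ^ 2 := sum_le_sum fun i _ =>
        sum_inner_sq_le (pairwise_inner_eq_zero_of_mod_eq hchain le_rfl _)
          (fun l hl => hK l (mem_filter.mp hl).1) hK0 w
    _ = 2 * K * ‖w‖ ^ 2 := by
        simp only [sum_const, Nat.card_Icc, Nat.add_one_sub_one, nsmul_eq_mul, Nat.cast_ofNat]
        ring

theorem sum_Icc_norm_smul_sum_inner_smul_add_smul_sq_le
    (hchain : ∀ l l', l' ≤ m → l + 2 ≤ l' → ⟪b l, b l'⟫ = 0)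
    (hK : ∀ l ∈ range (m + 1), ‖b l‖ ^ 2 ≤ K) (hK0 : 0 ≤ K) {n : ℕ} (hn : 2 ≤ n) {κ c : ℝ}
    (hκc : 0 ≤ K * κ ^ 2 + 2 * κ * c) (w : E) :
    ∑ i ∈ Icc 1 n,
        ‖κ • ∑ l ∈ range (m + 1) with l % n = (i - 1) % n, ⟪b l, w⟫ • b l + c • w‖ ^ 2
      ≤ (K * κ ^ 2 + 2 * κ * c) * (2 * K * ‖w‖ ^ 2) + n * (c ^ 2 * ‖w‖ ^ 2) :=
  calc _ ≤ ∑ i ∈ Icc 1 n, ((K * κ ^ 2 + 2 * κ * c) *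
          ∑ l ∈ range (m + 1) with l % n = (i - 1) % n, ⟪b l, w⟫ ^ 2 + c ^ 2 * ‖w‖ ^ 2) :=
        sum_le_sum fun i _ => norm_smul_sum_inner_smul_add_smul_sq_le
          (pairwise_inner_eq_zero_of_mod_eq hchain hn _) (fun l hl => hK l (mem_filter.mp hl).1)
          κ c w
    _ = (K * κ ^ 2 + 2 * κ * c) * ∑ l ∈ range (m + 1), ⟪b l, w⟫ ^ 2 + n * (c ^ 2 * ‖w‖ ^ 2) := by
        rw [sum_add_distrib, ← mul_sum, sum_Icc_sum_filter_mod_eq (by omega), sum_const,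
          Nat.card_Icc, nsmul_eq_mul, add_tsub_cancel_right]
    _ ≤ _ := by gcongr; exact sum_range_inner_sq_le hchain hK hK0 w

end Chain

section HardInstance

variable {m : ℕ} {ω ζ : ℝ} {b : ℕ → EuclideanSpace ℝ (Fin m)}

/-- The paper's `b₀, …, b_m`, where `e_k` is `EuclideanSpace.single ⟨k - 1, _⟩ 1`. -/
structure IsHardInstanceVectors (hm : 0 < m) (ω ζ : ℝ) (b : ℕ → EuclideanSpace ℝ (Fin m)) :
    Prop where
  zero : b 0 = ω • EuclideanSpace.single ⟨0, hm⟩ 1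
  of_le : ∀ l (_ : 1 ≤ l) (_ : l ≤ m - 1),
    b l = EuclideanSpace.single ⟨l - 1, by omega⟩ 1 - EuclideanSpace.single ⟨l, by omega⟩ 1
  last : b m = ζ • EuclideanSpace.single ⟨m - 1, by omega⟩ 1

namespace IsHardInstanceVectors

variable {hm : 0 < m}

theorem apply_eq_zero (hb : IsHardInstanceVectors hm ω ζ b) {l : ℕ} (hl : l ≤ m) {j : Fin m}
    (hj₁ : (j : ℕ) ≠ l - 1) (hj₂ : (j : ℕ) ≠ l) : b l j = 0 := by
  rcases Nat.eq_zero_or_pos l with rfl | hpos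
  · simp [hb.zero, Fin.ext_iff, hj₂]
  rcases hl.eq_or_lt with rfl | hlt
  · simp [hb.last, Fin.ext_iff, hj₁]
  · simp [hb.of_le l hpos (by omega), Fin.ext_iff, hj₁, hj₂]

theorem norm_sq_le (hb : IsHardInstanceVectors hm ω ζ b) (hω : ω ^ 2 ≤ 2) (hζ : ζ ^ 2 ≤ 2)
    {l : ℕ} (hl : l ≤ m) : ‖b l‖ ^ 2 ≤ 2 := by
  rcases Nat.eq_zero_or_pos l with rfl | hpos
  · simpa [hb.zero, norm_smul] using hω
  rcases hl.eq_or_lt with rfl | hlt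
  · simpa [hb.last, norm_smul] using hζ
  · rw [hb.of_le l hpos (by omega), norm_sub_sq_real, EuclideanSpace.inner_single_left]
    simp only [PiLp.norm_single, PiLp.single_apply, Fin.mk.injEq, if_neg (by omega : l - 1 ≠ l)]
    norm_num

theorem inner_eq_zero (hb : IsHardInstanceVectors hm ω ζ b) (l l' : ℕ) (hl' : l' ≤ m)
    (hll' : l + 2 ≤ l') : ⟪b l, b l'⟫ = 0 := by
  rw [PiLp.inner_apply]
  refine sum_eq_zero fun j _ => ?_
  by_cases hj : (j : ℕ) = l' - 1 ∨ (j : ℕ) = l'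
  · rw [hb.apply_eq_zero (by omega : l ≤ m) (by omega) (by omega), inner_zero_left]
  · push Not at hj
    rw [hb.apply_eq_zero hl' hj.1 hj.2, inner_zero_right]

end IsHardInstanceVectors

end HardInstance

theorem decomposition_quadratic_smoothness
    (n m : ℕ) (hn : 2 ≤ n) (hm : 2 ≤ m)
    (ω ζ c₁ c₃ : ℝ)
    (hω : 0 ≤ ω ∧ ω ≤ Real.sqrt 2) (hζ : 0 ≤ ζ ∧ ζ ≤ Real.sqrt 2) (hc₁ : 0 ≤ c₁)
    (b : ℕ → EuclideanSpace ℝ (Fin m))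
    (hb0 : b 0 = ω • EuclideanSpace.single (⟨0, by omega⟩ : Fin m) 1)
    (hbl : ∀ (l : ℕ) (_h1 : 1 ≤ l) (_h2 : l ≤ m - 1),
      b l = EuclideanSpace.single (⟨l - 1, by omega⟩ : Fin m) 1
            - EuclideanSpace.single (⟨l, by omega⟩ : Fin m) 1)
    (hbm : b m = ζ • EuclideanSpace.single (⟨m - 1, by omega⟩ : Fin m) 1)
    (r : ℕ → EuclideanSpace ℝ (Fin m) → ℝ)
    (hr : ∀ i : ℕ, 1 ≤ i → i ≤ n → ∀ x,
      r i x = (n / 2 : ℝ) *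
          (∑ l ∈ (Finset.range (m + 1)).filter (fun l => l % n = (i - 1) % n),
            ⟪b l, x⟫ ^ 2)
        + (c₁ / 2) * ‖x‖ ^ 2
        - (if i = 1 then c₃ * n * x ⟨0, by omega⟩ else 0)) :
    (∀ i : ℕ, 1 ≤ i → i ≤ n → ∀ u v,
      ‖gradient (r i) u - gradient (r i) v‖ ≤ (2 * n + c₁) * ‖u - v‖) ∧
    (∀ i : ℕ, 1 ≤ i → i ≤ n →
      ConvexOn ℝ Set.univ (fun x => r i x - (c₁ / 2) * ‖x‖ ^ 2)) ∧
    (∀ u v, (1 / n : ℝ) * ∑ i ∈ Finset.Icc 1 n, ‖gradient (r i) u - gradient (r i) v‖ ^ 2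
      ≤ Real.sqrt ((4 / n) * ((n + c₁) ^ 2 + n ^ 2) + c₁ ^ 2) ^ 2 * ‖u - v‖ ^ 2) := by
  have hm₀ : 0 < m := by omega
  have hb : IsHardInstanceVectors hm₀ ω ζ b := ⟨hb0, hbl, hbm⟩
  have hnorm : ∀ l ∈ range (m + 1), ‖b l‖ ^ 2 ≤ 2 := fun l hl =>
    hb.norm_sq_le ((Real.le_sqrt hω.1 zero_le_two).mp hω.2)
      ((Real.le_sqrt hζ.1 zero_le_two).mp hζ.2) (Nat.lt_succ_iff.mp (mem_range.mp hl))
  set a : ℕ → EuclideanSpace ℝ (Fin m) := fun i =>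
    (if i = 1 then c₃ * n else 0) • EuclideanSpace.single ⟨0, hm₀⟩ 1
  have hquad (i) (h₁ : 1 ≤ i) (h₂ : i ≤ n) (x) : r i x = (n : ℝ) / 2 *
      ∑ l ∈ range (m + 1) with l % n = (i - 1) % n, ⟪b l, x⟫ ^ 2 + c₁ / 2 * ‖x‖ ^ 2 - ⟪a i, x⟫ := by
    rw [hr i h₁ h₂ x]
    split_ifs with hi <;> simp [a, hi, real_inner_smul_left, EuclideanSpace.inner_single_left]
  refine ⟨fun i h₁ h₂ u v => ?_,
    fun i h₁ h₂ => convexOn_sub_of_quadratic (hquad i h₁ h₂) (by positivity), fun u v => ?_⟩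
  · rw [gradient_sub_gradient_of_quadratic (hquad i h₁ h₂)]
    exact norm_smul_sum_inner_smul_add_smul_le
      (pairwise_inner_eq_zero_of_mod_eq hb.inner_eq_zero hn _)
      (fun l hl => hnorm l (mem_filter.mp hl).1) zero_le_two (by positivity) hc₁ _
  · rw [sum_congr rfl fun i hi => by
      rw [gradient_sub_gradient_of_quadratic (hquad i (mem_Icc.mp hi).1 (mem_Icc.mp hi).2)],
      Real.sq_sqrt (by positivity)]
    calc _ ≤ 1 / (n : ℝ) * ((2 * n ^ 2 + 2 * n * c₁) * (2 * 2 * ‖u - v‖ ^ 2)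
          + n * (c₁ ^ 2 * ‖u - v‖ ^ 2)) := by
          gcongr
          exact sum_Icc_norm_smul_sum_inner_smul_add_smul_sq_le hb.inner_eq_zero hnorm
            zero_le_two hn (by positivity) _
      _ ≤ _ := by
          field_simp
          nlinarith [mul_nonneg (sq_nonneg c₁) (sq_nonneg ‖u - v‖)]
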